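/- Let Q be a type A_n quiver and I=[x_1,x_2], J=[y_1,y_2] intervals with x_2 <= y_2 and I \cap J = [z, x_2] nonempty (so z = max(x_1,y_1)). Then \chi_Q(d_I, d_J) = 1 - d_I(t(a_{z-1})) d_J(h(a_{z-1})) - d_I(t(a_{x_2})) d_J(h(a_{x_2})), where terms with out-of-range arrow indices (z-1 = 0 or x_2 = n) are interpreted as 0. -/

import Mathlib

/-- For a type `Aₙ` quiver, arrow `aᵢ` joins vertices `i` and `i+1`; `dir i = true`
means `aᵢ` points right.  `tail dir i` is the tail of `aᵢ`. -/
def qtail (dir : ℕ → Bool) (i : ℕ) : ℕ := if dir i then i else i + 1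

/-- The head of the arrow `aᵢ`. -/
def qhead (dir : ℕ → Bool) (i : ℕ) : ℕ := if dir i then i + 1 else i

/-- The indicator dimension vector of the interval `[a,b]`. -/
def ind (a b x : ℕ) : ℤ := if a ≤ x ∧ x ≤ b then 1 else 0

/-- The Euler form of a type `Aₙ` quiver with arrow directions `dir`:
`χ(d₁,d₂) = ∑ₓ d₁(x)d₂(x) - ∑ₐ d₁(t(a))d₂(h(a))`. -/
def euler (n : ℕ) (dir : ℕ → Bool) (d1 d2 : ℕ → ℤ) : ℤ :=
  (∑ x ∈ Finset.Icc 1 n, d1 x * d2 x) -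
    ∑ i ∈ Finset.Icc 1 (n - 1), d1 (qtail dir i) * d2 (qhead dir i)

/-!
On the overlap `[z, x₂]` both indicators are `1`, so the vertex sum counts `x₂ + 1 - z` vertices.
An arrow contributes to the arrow sum only if its tail lies in `I` and its head in `J`, which forces
both endpoints into `[z - 1, x₂ + 1]`: the `x₂ - z` arrows inside the overlap contribute `1` each,
and only the two boundary arrows `a_{z-1}` and `a_{x₂}` are left undetermined.
-/

open Finset

def arrowTerm (dir : ℕ → Bool) (d1 d2 : ℕ → ℤ) (i : ℕ) : ℤ :=
  d1 (qtail dir i) * d2 (qhead dir i)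

theorem euler_eq_sub_sum_arrowTerm (n : ℕ) (dir : ℕ → Bool) (d1 d2 : ℕ → ℤ) :
    euler n dir d1 d2 =
      (∑ x ∈ Icc 1 n, d1 x * d2 x) - ∑ i ∈ Icc 1 (n - 1), arrowTerm dir d1 d2 i :=
  rfl

theorem ind_mul_ind (a b c d x : ℕ) : ind a b x * ind c d x = ind (max a c) (min b d) x := by
  simp only [ind]
  split_ifs <;> omega

theorem sum_ind_Icc {m a b : ℕ} (ha : 1 ≤ a) (hab : a ≤ b + 1) (hb : b ≤ m) :
    ∑ x ∈ Icc 1 m, ind a b x = (b : ℤ) + 1 - a := by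
  have hfilter : {x ∈ Icc 1 m | a ≤ x ∧ x ≤ b} = Icc a b := by
    ext x
    simp only [mem_filter, mem_Icc]
    omega
  simp only [ind, sum_boole, hfilter, Nat.card_Icc]
  rw [Nat.cast_sub hab, Nat.cast_succ]

section Overlap

variable (dir : ℕ → Bool) {a b c d : ℕ}

theorem arrowTerm_ind_ind (hz : 1 ≤ max a c) (hzb : max a c ≤ b) (hbd : b ≤ d) (i : ℕ) :
    arrowTerm dir (ind a b) (ind c d) i =
      ind (max a c) (b - 1) i
        + (if i = max a c - 1 then arrowTerm dir (ind a b) (ind c d) (max a c - 1) else 0)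
        + (if i = b then arrowTerm dir (ind a b) (ind c d) b else 0) := by
  rcases eq_or_ne i (max a c - 1) with rfl | hlow
  · simp only [ind, if_true, show max a c - 1 ≠ b by omega, if_false]
    split_ifs <;> omega
  rcases eq_or_ne i b with rfl | hhigh
  · simp only [ind, if_true, hlow, if_false]
    split_ifs <;> omega
  simp only [arrowTerm, ind, qtail, qhead, hlow, hhigh, if_false]
  split_ifs <;> omega

theorem sum_arrowTerm_ind_ind {n : ℕ} (hz : 1 ≤ max a c) (hzb : max a c ≤ b) (hbd : b ≤ d)
    (hbn : b ≤ n) :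
    ∑ i ∈ Icc 1 (n - 1), arrowTerm dir (ind a b) (ind c d) i =
      (b : ℤ) - max a c
        + (if max a c = 1 then 0 else arrowTerm dir (ind a b) (ind c d) (max a c - 1))
        + (if b = n then 0 else arrowTerm dir (ind a b) (ind c d) b) := by
  have hlow : max a c - 1 ∈ Icc 1 (n - 1) ↔ ¬max a c = 1 := by
    simp only [mem_Icc]
    omega
  have hhigh : b ∈ Icc 1 (n - 1) ↔ ¬b = n := by
    simp only [mem_Icc]
    omega
  rw [sum_congr rfl fun i _ => arrowTerm_ind_ind dir hz hzb hbd i, sum_add_distrib,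
    sum_add_distrib, sum_ind_Icc hz (by omega) (by omega), sum_ite_eq', sum_ite_eq',
    Nat.cast_sub (by omega : 1 ≤ b)]
  simp only [hlow, hhigh, ite_not]
  ring

end Overlap

theorem euler_overlap_general (n x1 x2 y1 y2 : ℕ) (dir : ℕ → Bool)
    (h1 : 1 ≤ x1) (h5 : y2 ≤ n) (h6 : x2 ≤ y2) (hint : max x1 y1 ≤ x2) :
    euler n dir (ind x1 x2) (ind y1 y2) =
      1 - (if max x1 y1 = 1 then 0 else
            ind x1 x2 (qtail dir (max x1 y1 - 1)) * ind y1 y2 (qhead dir (max x1 y1 - 1)))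
        - (if x2 = n then 0 else
            ind x1 x2 (qtail dir x2) * ind y1 y2 (qhead dir x2)) := by
  have hz : 1 ≤ max x1 y1 := le_max_of_le_left h1
  have hx2n : x2 ≤ n := h6.trans h5
  rw [euler_eq_sub_sum_arrowTerm, sum_arrowTerm_ind_ind dir hz hint h6 hx2n]
  simp only [ind_mul_ind, min_eq_left h6]
  rw [sum_ind_Icc hz (by omega) hx2n]
  simp only [arrowTerm]
  ring

/-- For intervals `I=[x₁,x₂]`, `J=[y₁,y₂]` with `x₂ ≤ y₂` and nonempty intersection
`[z,x₂]` where `z = max x₁ y₁`: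
`χ_Q(d_I,d_J) = 1 - d_I(t(a_{z-1}))d_J(h(a_{z-1})) - d_I(t(a_{x₂}))d_J(h(a_{x₂}))`,
with out-of-range arrow terms (`z-1 = 0` or `x₂ = n`) interpreted as `0`. -/
theorem euler_overlap (n x1 x2 y1 y2 : ℕ) (dir : ℕ → Bool)
    (h1 : 1 ≤ x1) (h2 : x1 ≤ x2) (h3 : 1 ≤ y1) (h4 : y1 ≤ y2) (h5 : y2 ≤ n)
    (h6 : x2 ≤ y2) (hint : max x1 y1 ≤ x2) :
    euler n dir (ind x1 x2) (ind y1 y2) =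
      1 - (if max x1 y1 = 1 then 0 else
            ind x1 x2 (qtail dir (max x1 y1 - 1)) * ind y1 y2 (qhead dir (max x1 y1 - 1)))
        - (if x2 = n then 0 else
            ind x1 x2 (qtail dir x2) * ind y1 y2 (qhead dir x2)) :=
  euler_overlap_general n x1 x2 y1 y2 dir h1 h5 h6 hint
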